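/- Let n ≥ 1 and let A be a real n × n matrix. Let C ⊆ ℝ^n be a closed convex cone (closed under addition and under multiplication by nonnegative scalars, and topologically closed) with C ∩ (−C) = {0} and with nonempty topological interior, and assume A maps C into itself. Let ρ be the supremum of |μ| over all complex eigenvalues μ of A. Then for every vector x in the interior of C and every linear functional φ : ℝ^n → ℝ with φ(y) > 0 for all y ∈ C, y ≠ 0, the sequence k ↦ (φ(A^k.mulVec x)) ^ (1 / k : ℝ) converges to ρ as k → ∞. -/

import Mathlib

/-!
Since `φ` is continuous and positive on the compact base `C ∩ sphere 0 1`, it dominates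
`m * ‖·‖` on `C`. If the closed ball of radius `δ` around `x` lies in `C`, then `A ^ k (x ± v)`
lies in `C` for `‖v‖ ≤ δ`, and adding the two bounds `m * ‖A ^ k (x ± v)‖ ≤ φ (A ^ k (x ± v))`
gives `m * ‖A ^ k v‖ ≤ φ (A ^ k x)`. Hence `φ (A ^ k x)` is squeezed between two constant
multiples of `‖A ^ k‖`, and Gelfand's formula `‖A ^ k‖ ^ (1 / k) → ρ` finishes the proof.
-/

open Filter Metric Set Topology
open scoped ENNReal

-- On `ι → ℝ` with its sup norm this is the operator norm (`Matrix.linfty_opNorm_eq_opNorm`).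
attribute [local instance] Matrix.linftyOpSeminormedAddCommGroup Matrix.linftyOpNormedRing
  Matrix.linftyOpNormedAlgebra

theorem tendsto_rpow_one_div_of_mul_le_of_le_mul {f g : ℕ → ℝ} {a b ρ : ℝ} (ha : 0 < a)
    (hb : 0 < b) (hg : ∀ k, 0 ≤ g k) (hlow : ∀ k, a * g k ≤ f k) (hup : ∀ k, f k ≤ b * g k)
    (hlim : Tendsto (fun k : ℕ => g k ^ (1 / (k : ℝ))) atTop (𝓝 ρ)) :
    Tendsto (fun k : ℕ => f k ^ (1 / (k : ℝ))) atTop (𝓝 ρ) := by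
  have hscaled : ∀ c : ℝ, 0 < c →
      Tendsto (fun k : ℕ => (c * g k) ^ (1 / (k : ℝ))) atTop (𝓝 ρ) := fun c hc => by
      have hconst : Tendsto (fun k : ℕ => c ^ (1 / (k : ℝ))) atTop (𝓝 1) := by
        simpa using tendsto_const_nhds.rpow tendsto_one_div_atTop_nhds_zero_nat (Or.inl hc.ne')
      simpa [Real.mul_rpow hc.le (hg _)] using hconst.mul hlim
  refine tendsto_of_tendsto_of_tendsto_of_le_of_le (hscaled a ha) (hscaled b hb)
    (fun k => ?_) (fun k => ?_)
  · exact Real.rpow_le_rpow (mul_nonneg ha.le (hg k)) (hlow k) (by positivity)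
  · exact Real.rpow_le_rpow ((mul_nonneg ha.le (hg k)).trans (hlow k)) (hup k) (by positivity)

namespace spectrum

theorem spectralRadius_eq_ofReal_sSup {𝕜 A : Type*} [NormedField 𝕜] [ProperSpace 𝕜]
    [NormedRing A] [NormedAlgebra 𝕜 A] [CompleteSpace A] (a : A) :
    spectralRadius 𝕜 a = ENNReal.ofReal (sSup ((‖·‖) '' spectrum 𝕜 a)) := by
  rcases (spectrum 𝕜 a).eq_empty_or_nonempty with h | h
  · simp [spectralRadius, h]
  obtain ⟨μ, hμ, hμr⟩ := exists_nnnorm_eq_spectralRadius_of_nonempty h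
  have hmax : IsGreatest ((‖·‖) '' spectrum 𝕜 a) ‖μ‖ := by
    refine ⟨⟨μ, hμ, rfl⟩, ?_⟩
    rintro _ ⟨ν, hν, rfl⟩
    have : (‖ν‖₊ : ℝ≥0∞) ≤ ‖μ‖₊ := hμr ▸ le_iSup₂ (f := fun ν _ => (‖ν‖₊ : ℝ≥0∞)) ν hν
    exact_mod_cast this
  rw [hmax.csSup_eq, ← hμr]
  exact (ofReal_norm μ).symm

theorem tendsto_norm_pow_rpow_one_div {A : Type*} [NormedRing A] [NormedAlgebra ℂ A]
    [CompleteSpace A] (a : A) :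
    Tendsto (fun k : ℕ => ‖a ^ k‖ ^ (1 / (k : ℝ))) atTop
      (𝓝 (sSup ((‖·‖) '' spectrum ℂ a))) := by
  have h := pow_norm_pow_one_div_tendsto_nhds_spectralRadius a
  rw [spectralRadius_eq_ofReal_sSup] at h
  have hρ : 0 ≤ sSup ((‖·‖) '' spectrum ℂ a) :=
    Real.sSup_nonneg (by rintro _ ⟨μ, -, rfl⟩; exact norm_nonneg μ)
  have h' := (ENNReal.tendsto_toReal ENNReal.ofReal_ne_top).comp h
  rw [ENNReal.toReal_ofReal hρ] at h'
  exact h'.congr fun k => ENNReal.toReal_ofReal (by positivity)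

end spectrum

section Cone

variable {E : Type*} [NormedAddCommGroup E] [NormedSpace ℝ E] {C : Set E} {φ : E →ₗ[ℝ] ℝ}
  {m : ℝ}

theorem exists_pos_mul_norm_le_of_pos_on_cone [FiniteDimensional ℝ E]
    (hsmul : ∀ t : ℝ, 0 < t → ∀ x ∈ C, t • x ∈ C) (hC : IsClosed C)
    (hφ : ∀ y ∈ C, y ≠ 0 → 0 < φ y) : ∃ m > 0, ∀ z ∈ C, m * ‖z‖ ≤ φ z := by
  have hK : IsCompact (C ∩ sphere 0 1) := (isCompact_sphere 0 1).inter_left hC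
  obtain ⟨m, hm, hmK⟩ := hK.exists_forall_le' φ.continuous_of_finiteDimensional.continuousOn
    fun z hz => hφ z hz.1 (ne_of_mem_sphere hz.2 one_ne_zero)
  refine ⟨m, hm, fun z hz => ?_⟩
  rcases eq_or_ne z 0 with rfl | hz0
  · simp
  have hnz : 0 < ‖z‖ := norm_pos_iff.2 hz0
  have h := hmK (‖z‖⁻¹ • z) ⟨hsmul _ (inv_pos.2 hnz) z hz, by simp [norm_smul, hnz.ne']⟩
  rw [map_smul, smul_eq_mul, le_inv_mul_iff₀ hnz] at h
  linarith

theorem mul_norm_le_of_add_mem_of_sub_mem (hm : 0 ≤ m) (hmC : ∀ z ∈ C, m * ‖z‖ ≤ φ z)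
    {T : E →ₗ[ℝ] E} (hT : MapsTo T C C) {x v : E} (hplus : x + v ∈ C) (hminus : x - v ∈ C) :
    m * ‖T v‖ ≤ φ (T x) := by
  have h₁ := hmC _ (hT hplus)
  have h₂ := hmC _ (hT hminus)
  rw [map_add] at h₁
  rw [map_sub] at h₂
  have hsum : φ (T x + T v) + φ (T x - T v) = 2 * φ (T x) := by
    rw [map_add, map_sub]; ring
  have htri : 2 * ‖T v‖ ≤ ‖T x + T v‖ + ‖T x - T v‖ := by
    have h := norm_sub_le (T x + T v) (T x - T v)
    rwa [add_sub_sub_cancel, ← two_smul ℝ, norm_smul, Real.norm_two] at h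
  have := mul_le_mul_of_nonneg_left htri hm
  linarith

theorem mul_mul_opNorm_le_of_closedBall_subset (hm : 0 < m) (hmC : ∀ z ∈ C, m * ‖z‖ ≤ φ z)
    {x : E} {δ : ℝ} (hδ : 0 < δ) (hball : closedBall x δ ⊆ C) {T : E →L[ℝ] E}
    (hT : MapsTo T C C) : m * δ * ‖T‖ ≤ φ (T x) := by
  have hTx : 0 ≤ φ (T x) :=
    (mul_nonneg hm.le (norm_nonneg _)).trans (hmC _ (hT (hball (mem_closedBall_self hδ.le))))
  rw [← le_div_iff₀' (by positivity)]
  refine T.opNorm_le_of_unit_norm (by positivity) fun v hv => ?_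
  have hmem : ∀ w : E, ‖w‖ ≤ δ → x + w ∈ C := fun w hw => hball (by simpa [dist_eq_norm])
  have h := mul_norm_le_of_add_mem_of_sub_mem hm.le hmC (T := T.toLinearMap) hT
    (hmem (δ • v) (by simp [norm_smul, hv, abs_of_pos hδ]))
    (by simpa [sub_eq_add_neg] using hmem (-(δ • v)) (by simp [norm_smul, hv, abs_of_pos hδ]))
  rw [le_div_iff₀' (by positivity)]
  simpa [norm_smul, abs_of_pos hδ, mul_assoc, mul_left_comm] using h

end Cone

namespace Matrix

theorem mapsTo_pow_mulVec {ι R : Type*} [Fintype ι] [DecidableEq ι] [Semiring R]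
    {A : Matrix ι ι R} {C : Set (ι → R)} (hA : MapsTo A.mulVec C C) (k : ℕ) :
    MapsTo (A ^ k).mulVec C C := by
  induction k with
  | zero => intro z hz; simpa using hz
  | succ k ih =>
    intro z hz
    rw [pow_succ, ← mulVec_mulVec]
    exact ih (hA hz)

theorem linfty_opNorm_map_eq {ι κ α β : Type*} [Fintype ι] [Fintype κ]
    [SeminormedAddCommGroup α] [SeminormedAddCommGroup β] (A : Matrix ι κ α) (f : α → β)
    (hf : ∀ a, ‖f a‖₊ = ‖a‖₊) :
    ‖A.map f‖ = ‖A‖ := by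
  simp [linfty_opNorm_def, hf]

theorem tendsto_linfty_opNorm_pow_rpow_one_div {ι : Type*} [Fintype ι] [DecidableEq ι]
    (A : Matrix ι ι ℝ) :
    Tendsto (fun k : ℕ => ‖A ^ k‖ ^ (1 / (k : ℝ))) atTop
      (𝓝 (sSup ((‖·‖) '' spectrum ℂ (A.map Complex.ofReal)))) := by
  have hpow : ∀ k : ℕ, ‖A.map Complex.ofReal ^ k‖ = ‖A ^ k‖ := fun k => by
    have hmap : (A ^ k).map Complex.ofReal = A.map Complex.ofReal ^ k :=
      map_pow (Complex.ofRealHom.mapMatrix (m := ι)) A k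
    rw [← hmap]
    exact linfty_opNorm_map_eq _ _ Complex.nnnorm_real
  simpa only [hpow] using spectrum.tendsto_norm_pow_rpow_one_div (A.map Complex.ofReal)

end Matrix

theorem growth_rate_eq_spectralRadius_general (n : ℕ)
    (A : Matrix (Fin n) (Fin n) ℝ) (C : Set (Fin n → ℝ))
    (hsmul : ∀ t : ℝ, 0 ≤ t → ∀ x ∈ C, t • x ∈ C)
    (hclosed : IsClosed C)
    (hmap : ∀ x ∈ C, A.mulVec x ∈ C)
    (ρ : ℝ)
    (hρ : ρ = sSup ((fun μ : ℂ => ‖μ‖) '' spectrum ℂ (A.map Complex.ofReal)))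
    (x : Fin n → ℝ) (hx : x ∈ interior C)
    (φ : (Fin n → ℝ) →ₗ[ℝ] ℝ) (hφ : ∀ y ∈ C, y ≠ 0 → 0 < φ y) :
    Filter.Tendsto (fun k : ℕ => (φ ((A ^ k).mulVec x)) ^ (1 / (k : ℝ)))
      Filter.atTop (nhds ρ) := by
  obtain ⟨m, hm, hmC⟩ := exists_pos_mul_norm_le_of_pos_on_cone (fun t ht => hsmul t ht.le)
    hclosed hφ
  obtain ⟨δ, hδ, hball⟩ := nhds_basis_closedBall.mem_iff.1 (mem_interior_iff_mem_nhds.1 hx)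
  set ψ := LinearMap.toContinuousLinearMap φ
  subst hρ
  refine tendsto_rpow_one_div_of_mul_le_of_le_mul (mul_pos hm hδ)
    (by positivity : 0 < ‖ψ‖ * ‖x‖ + 1)
    (fun k => norm_nonneg (A ^ k)) (fun k => ?_) (fun k => ?_)
    A.tendsto_linfty_opNorm_pow_rpow_one_div
  · rw [Matrix.linfty_opNorm_eq_opNorm]
    exact mul_mul_opNorm_le_of_closedBall_subset hm hmC hδ hball
      (Matrix.mapsTo_pow_mulVec hmap k)
  · calc φ ((A ^ k).mulVec x) ≤ ‖ψ‖ * ‖(A ^ k).mulVec x‖ :=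
          (le_abs_self _).trans (ψ.le_opNorm _)
      _ ≤ ‖ψ‖ * (‖A ^ k‖ * ‖x‖) := by gcongr; exact Matrix.linfty_opNorm_mulVec _ _
      _ ≤ (‖ψ‖ * ‖x‖ + 1) * ‖A ^ k‖ := by nlinarith [norm_nonneg ψ, norm_nonneg (A ^ k)]

/-- For a matrix preserving a closed strictly convex cone with nonempty interior,
any interior vector `x` and any linear functional `φ` strictly positive on the
cone satisfy `(φ (A^k x))^(1/k) → ρ`, the spectral radius of `A`. -/
theorem growth_rate_eq_spectralRadius (n : ℕ) (hn : 1 ≤ n)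
    (A : Matrix (Fin n) (Fin n) ℝ) (C : Set (Fin n → ℝ))
    (hadd : ∀ x ∈ C, ∀ y ∈ C, x + y ∈ C)
    (hsmul : ∀ t : ℝ, 0 ≤ t → ∀ x ∈ C, t • x ∈ C)
    (hclosed : IsClosed C)
    (hstrict : ∀ x ∈ C, -x ∈ C → x = 0)
    (hint : (interior C).Nonempty)
    (hmap : ∀ x ∈ C, A.mulVec x ∈ C)
    (ρ : ℝ)
    (hρ : ρ = sSup ((fun μ : ℂ => ‖μ‖) '' spectrum ℂ (A.map Complex.ofReal)))
    (x : Fin n → ℝ) (hx : x ∈ interior C)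
    (φ : (Fin n → ℝ) →ₗ[ℝ] ℝ) (hφ : ∀ y ∈ C, y ≠ 0 → 0 < φ y) :
    Filter.Tendsto (fun k : ℕ => (φ ((A ^ k).mulVec x)) ^ (1 / (k : ℝ)))
      Filter.atTop (nhds ρ) :=
  growth_rate_eq_spectralRadius_general n A C hsmul hclosed hmap ρ hρ x hx φ hφ
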